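/- arXiv:1808.04773 — 7 statements merged into one kernel-verified Lean document; each statement's English description precedes it below -/
import Mathlib

section
/- Suppose d_k > 0 for every k = 1,…,K. Then the vector p̂ defined by p̂_k = [Σ_{l=1}^K (d_k²/d_l²)^{1/(m-1)}]^{-1} belongs to the probability simplex Δ_K, and f_d(p̂) ≤ f_d(p) for every p ∈ Δ_K; that is, p̂ is a global minimizer of f_d on Δ_K. -/
/-!
The minimizer is characterised by the first-order condition: `d_k² p̂_k^(m-1)` is the same
constant `c` for every `k`. Since `x ↦ x ^ m` lies above its tangent lines, each summand satisfies
`p_k^m d_k² ≥ p̂_k^m d_k² + m c (p_k - p̂_k)`, and the linear terms cancel after summing because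
`p` and `p̂` have the same total mass.
-/

open Finset

lemma Real.rpow_add_mul_rpow_sub_one_mul_sub_le_rpow {m x y : ℝ} (hm : 1 ≤ m) (hx : 0 ≤ x)
    (hy : 0 < y) : y ^ m + m * y ^ (m - 1) * (x - y) ≤ x ^ m := by
  have hbernoulli : 1 + m * (x / y - 1) ≤ (x / y) ^ m := by
    have := one_add_mul_self_le_rpow_one_add (s := x / y - 1) (by linarith [div_nonneg hx hy.le]) hm
    rwa [add_sub_cancel] at this
  calc y ^ m + m * y ^ (m - 1) * (x - y) = y ^ m * (1 + m * (x / y - 1)) := by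
        rw [Real.rpow_sub_one hy.ne']
        field_simp
    _ ≤ y ^ m * (x / y) ^ m := by gcongr
    _ = x ^ m := by
        rw [Real.div_rpow hx hy.le]
        field_simp

lemma Finset.sum_rpow_mul_le_of_rpow_sub_one_mul_eq {ι : Type*} (s : Finset ι) {m c : ℝ}
    (hm : 1 ≤ m) {w x y : ι → ℝ} (hw : ∀ i ∈ s, 0 ≤ w i) (hx : ∀ i ∈ s, 0 ≤ x i)
    (hy : ∀ i ∈ s, 0 < y i) (hc : ∀ i ∈ s, y i ^ (m - 1) * w i = c)
    (hsum : ∑ i ∈ s, x i = ∑ i ∈ s, y i) :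
    ∑ i ∈ s, y i ^ m * w i ≤ ∑ i ∈ s, x i ^ m * w i := by
  have htangent : ∀ i ∈ s, y i ^ m * w i + m * c * (x i - y i) ≤ x i ^ m * w i := by
    intro i hi
    rw [← hc i hi]
    have := mul_le_mul_of_nonneg_right
      (Real.rpow_add_mul_rpow_sub_one_mul_sub_le_rpow hm (hx i hi) (hy i hi)) (hw i hi)
    linarith
  calc ∑ i ∈ s, y i ^ m * w i = ∑ i ∈ s, (y i ^ m * w i + m * c * (x i - y i)) := by
        rw [sum_add_distrib, ← mul_sum, sum_sub_distrib, hsum, sub_self, mul_zero, add_zero]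
    _ ≤ ∑ i ∈ s, x i ^ m * w i := sum_le_sum htangent

lemma Real.inv_sum_div_rpow_eq {ι : Type*} (s : Finset ι) {a : ι → ℝ} (ha : ∀ i ∈ s, 0 < a i)
    (e : ℝ) {k : ι} (hk : 0 < a k) :
    (∑ l ∈ s, (a k / a l) ^ e)⁻¹ = a k ^ (-e) / ∑ l ∈ s, a l ^ (-e) := by
  have hsum : ∑ l ∈ s, (a k / a l) ^ e = a k ^ e * ∑ l ∈ s, a l ^ (-e) := by
    rw [mul_sum]
    refine sum_congr rfl fun l hl => ?_
    rw [Real.div_rpow hk.le (ha l hl).le, Real.rpow_neg (ha l hl).le, div_eq_mul_inv]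
  rw [hsum, mul_inv, Real.rpow_neg hk.le, div_eq_mul_inv]

lemma div_sum_mem_simplex {ι : Type*} [Fintype ι] [Nonempty ι] {w : ι → ℝ}
    (hw : ∀ i, 0 < w i) :
    (∀ k, 0 ≤ w k / ∑ i, w i ∧ w k / ∑ i, w i ≤ 1) ∧ ∑ k, w k / ∑ i, w i = 1 := by
  have hpos : 0 < ∑ i, w i := sum_pos (fun i _ => hw i) univ_nonempty
  refine ⟨fun k => ⟨div_nonneg (hw k).le hpos.le, ?_⟩, ?_⟩
  · rw [div_le_one hpos]
    exact single_le_sum (fun i _ => (hw i).le) (mem_univ k)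
  · rw [← sum_div, div_self hpos.ne']

lemma Real.rpow_neg_inv_div_rpow_sub_one_mul {m a S : ℝ} (hm : m ≠ 1) (ha : 0 < a)
    (hS : 0 < S) : (a ^ (-(1 / (m - 1))) / S) ^ (m - 1) * a = (S ^ (m - 1))⁻¹ := by
  have hm1 : m - 1 ≠ 0 := sub_ne_zero.mpr hm
  rw [Real.div_rpow (Real.rpow_nonneg ha.le _) hS.le, ← Real.rpow_mul ha.le,
    show -(1 / (m - 1)) * (m - 1) = -1 by field_simp, Real.rpow_neg_one]
  field_simp

/-- For positive `d`, the vector `p̂` with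
`p̂_k = [Σ_l (d_k²/d_l²)^{1/(m-1)}]⁻¹` lies in the probability simplex and globally
minimizes `f_d(p) = Σ_k p_k^m d_k²` on the simplex. -/
theorem phat_mem_simplex_and_isMinOn
    (K : ℕ) (hK : 1 ≤ K) (m : ℝ) (hm : 1 < m)
    (d : Fin K → ℝ) (hd : ∀ k, 0 < d k)
    (phat : Fin K → ℝ)
    (hphat : ∀ k, phat k = (∑ l, ((d k ^ 2) / (d l ^ 2)) ^ ((1 : ℝ) / (m - 1)))⁻¹) :
    ((∀ k, 0 ≤ phat k ∧ phat k ≤ 1) ∧ ∑ k, phat k = 1) ∧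
      ∀ p : Fin K → ℝ, ((∀ k, 0 ≤ p k ∧ p k ≤ 1) ∧ ∑ k, p k = 1) →
        ∑ k, phat k ^ m * d k ^ 2 ≤ ∑ k, p k ^ m * d k ^ 2 := by
  have : Nonempty (Fin K) := Fin.pos_iff_nonempty.mp hK
  have hdsq : ∀ k, 0 < d k ^ 2 := fun k => pow_pos (hd k) 2
  set w : Fin K → ℝ := fun k => (d k ^ 2) ^ (-(1 / (m - 1)))
  have hw : ∀ k, 0 < w k := fun k => Real.rpow_pos_of_pos (hdsq k) _
  have hphat_eq : phat = fun k => w k / ∑ l, w l :=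
    funext fun k => (hphat k).trans (Real.inv_sum_div_rpow_eq _ (fun l _ => hdsq l) _ (hdsq k))
  subst hphat_eq
  have hsimplex := div_sum_mem_simplex hw
  have hS : 0 < ∑ l, w l := sum_pos (fun l _ => hw l) univ_nonempty
  refine ⟨hsimplex, fun p hp => ?_⟩
  exact sum_rpow_mul_le_of_rpow_sub_one_mul_eq univ hm.le (fun k _ => (hdsq k).le)
    (fun k _ => (hp.1 k).1) (fun k _ => div_pos (hw k) hS)
    (fun k _ => Real.rpow_neg_inv_div_rpow_sub_one_mul hm.ne' (hdsq k) hS)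
    (hp.2.trans hsimplex.2.symm)
end

section
/- Suppose d_k > 0 for every k = 1,…,K. If p ∈ Δ_K satisfies f_d(p) ≤ f_d(q) for every q ∈ Δ_K, then necessarily p_k = [Σ_{l=1}^K (d_k²/d_l²)^{1/(m-1)}]^{-1} for every k; that is, the global minimizer of f_d on the probability simplex is unique and is given by this formula. -/
open Finset Real

/-! The stationarity condition of the Lagrangian, `m p_k^(m-1) d_k² = λ`, has exactly one solution
on the simplex, `p̂_k ∝ (d_k²)^(-1/(m-1))`. Summing the strict tangent-line inequality
`x^m > y^m + m y^(m-1) (x - y)` at `y = p̂_k` against the weights `d_k²` shows that every other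
point of the simplex has a strictly larger objective, since the linear terms add up to
`λ (∑ p_k - ∑ p̂_k) = 0`. -/

section Tangent

variable {m : ℝ} (hm : 1 < m) {x y : ℝ} (hx : 0 ≤ x) (hy : 0 < y)
include hm hx hy

/-- This is Bernoulli's inequality at `s = x / y - 1`, rescaled by `y ^ m`. -/
lemma rpow_tangent_lt (hxy : x ≠ y) : y ^ m + m * y ^ (m - 1) * (x - y) < x ^ m := by
  have hs : -1 ≤ x / y - 1 := by linarith [div_nonneg hx hy.le]
  have hs₀ : x / y - 1 ≠ 0 := by
    rwa [sub_ne_zero, ne_eq, div_eq_one_iff_eq hy.ne']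
  have bernoulli := one_add_mul_self_lt_rpow_one_add hs hs₀ hm
  rw [add_sub_cancel, div_rpow hx hy.le, lt_div_iff₀ (rpow_pos_of_pos hy m)] at bernoulli
  calc y ^ m + m * y ^ (m - 1) * (x - y) = (1 + m * (x / y - 1)) * y ^ m := by
        rw [rpow_sub_one hy.ne']; field_simp
    _ < x ^ m := bernoulli

lemma rpow_tangent_le : y ^ m + m * y ^ (m - 1) * (x - y) ≤ x ^ m := by
  rcases eq_or_ne x y with rfl | hxy
  · simp
  · exact (rpow_tangent_lt hm hx hy hxy).le

end Tangent

/-- `hstat` says that the gradient `m q_k^(m-1) c_k` of the objective is constant at `q`. -/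
theorem sum_rpow_mul_lt_of_rpow_sub_one_mul_eq {ι : Type*} [Fintype ι] {m : ℝ} (hm : 1 < m)
    {c p q : ι → ℝ} {lam : ℝ} (hc : ∀ k, 0 < c k) (hp : ∀ k, 0 ≤ p k) (hq : ∀ k, 0 < q k)
    (hstat : ∀ k, q k ^ (m - 1) * c k = lam) (hsum : ∑ k, p k = ∑ k, q k) (hpq : p ≠ q) :
    ∑ k, q k ^ m * c k < ∑ k, p k ^ m * c k := by
  obtain ⟨k₀, hk₀⟩ := Function.ne_iff.mp hpq
  have tangent_sum :
      ∑ k, (q k ^ m * c k + m * lam * (p k - q k)) < ∑ k, p k ^ m * c k := by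
    refine sum_lt_sum (fun k _ => ?_) ⟨k₀, mem_univ k₀, ?_⟩
    · have := mul_le_mul_of_nonneg_right (rpow_tangent_le hm (hp k) (hq k)) (hc k).le
      rw [← hstat k]; linarith
    · have := mul_lt_mul_of_pos_right (rpow_tangent_lt hm (hp k₀) (hq k₀) hk₀) (hc k₀)
      rw [← hstat k₀]; linarith
  have linear_terms_vanish : ∑ k, m * lam * (p k - q k) = 0 := by
    rw [← mul_sum, sum_sub_distrib, hsum, sub_self, mul_zero]
  rwa [sum_add_distrib, linear_terms_vanish, add_zero] at tangent_sum

section Phat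

variable {ι : Type*} [Fintype ι] (m : ℝ) (c : ι → ℝ)

noncomputable def phat (k : ι) : ℝ :=
  c k ^ (-(1 / (m - 1))) / ∑ l, c l ^ (-(1 / (m - 1)))

variable {m c}

lemma inv_sum_rpow_div_eq_phat (hc : ∀ k, 0 < c k) (k : ι) :
    (∑ l, (c k / c l) ^ (1 / (m - 1)))⁻¹ = phat m c k := by
  have hsum : ∑ l, (c k / c l) ^ (1 / (m - 1)) =
      c k ^ (1 / (m - 1)) * ∑ l, c l ^ (-(1 / (m - 1))) := by
    rw [mul_sum]
    refine sum_congr rfl fun l _ => ?_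
    rw [div_rpow (hc k).le (hc l).le, rpow_neg (hc l).le, div_eq_mul_inv]
  rw [hsum, mul_inv, phat, rpow_neg (hc k).le]
  exact (div_eq_mul_inv _ _).symm

variable [Nonempty ι] (hc : ∀ k, 0 < c k)
include hc

lemma sum_rpow_neg_pos : 0 < ∑ l, c l ^ (-(1 / (m - 1))) :=
  sum_pos (fun l _ => rpow_pos_of_pos (hc l) _) univ_nonempty

lemma phat_pos (k : ι) : 0 < phat m c k :=
  div_pos (rpow_pos_of_pos (hc k) _) (sum_rpow_neg_pos hc)

lemma sum_phat : ∑ k, phat m c k = 1 := by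
  simp only [phat]
  rw [← sum_div, div_self (sum_rpow_neg_pos hc).ne']

lemma phat_le_one (k : ι) : phat m c k ≤ 1 :=
  sum_phat hc ▸ single_le_sum (fun l _ => (phat_pos hc l).le) (mem_univ k)

lemma phat_rpow_sub_one_mul (hm : m ≠ 1) (k : ι) :
    phat m c k ^ (m - 1) * c k = ((∑ l, c l ^ (-(1 / (m - 1)))) ^ (m - 1))⁻¹ := by
  have hm₁ : m - 1 ≠ 0 := sub_ne_zero.mpr hm
  have hnum : (c k ^ (-(1 / (m - 1)))) ^ (m - 1) = (c k)⁻¹ := by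
    rw [← rpow_mul (hc k).le, neg_mul, one_div_mul_cancel hm₁, rpow_neg_one]
  rw [phat, div_rpow (rpow_pos_of_pos (hc k) _).le (sum_rpow_neg_pos hc).le, hnum]
  field_simp [(hc k).ne']

end Phat

theorem minimizer_unique_eq_phat_general
    (K : ℕ) (m : ℝ) (hm : 1 < m)
    (d : Fin K → ℝ) (hd : ∀ k, 0 < d k)
    (p : Fin K → ℝ)
    (hp : (∀ k, 0 ≤ p k ∧ p k ≤ 1) ∧ ∑ k, p k = 1)
    (hmin : ∀ q : Fin K → ℝ, ((∀ k, 0 ≤ q k ∧ q k ≤ 1) ∧ ∑ k, q k = 1) →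
        ∑ k, p k ^ m * d k ^ 2 ≤ ∑ k, q k ^ m * d k ^ 2) :
    ∀ k, p k = (∑ l, ((d k ^ 2) / (d l ^ 2)) ^ ((1 : ℝ) / (m - 1)))⁻¹ := by
  have hc : ∀ k, 0 < d k ^ 2 := fun k => pow_pos (hd k) 2
  have : Nonempty (Fin K) :=
    (nonempty_of_sum_ne_zero (hp.2 ▸ one_ne_zero : ∑ k, p k ≠ 0)).to_subtype.map Subtype.val
  have hp_eq : p = phat m (fun k => d k ^ 2) := by
    by_contra hne
    have hlt := sum_rpow_mul_lt_of_rpow_sub_one_mul_eq hm hc (fun k => (hp.1 k).1)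
      (phat_pos hc) (phat_rpow_sub_one_mul hc hm.ne') (by rw [hp.2, sum_phat hc]) hne
    have hle := hmin (phat m fun k => d k ^ 2) ⟨fun k => ⟨(phat_pos hc k).le, phat_le_one hc k⟩, sum_phat hc⟩
    exact hlt.not_ge hle
  intro k
  rw [inv_sum_rpow_div_eq_phat hc k, hp_eq]

/-- For positive `d`, any global minimizer of `f_d` on the probability
simplex must be given by `p_k = [Σ_l (d_k²/d_l²)^{1/(m-1)}]⁻¹`; the minimizer is unique. -/
theorem minimizer_unique_eq_phat
    (K : ℕ) (hK : 1 ≤ K) (m : ℝ) (hm : 1 < m)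
    (d : Fin K → ℝ) (hd : ∀ k, 0 < d k)
    (p : Fin K → ℝ)
    (hp : (∀ k, 0 ≤ p k ∧ p k ≤ 1) ∧ ∑ k, p k = 1)
    (hmin : ∀ q : Fin K → ℝ, ((∀ k, 0 ≤ q k ∧ q k ≤ 1) ∧ ∑ k, q k = 1) →
        ∑ k, p k ^ m * d k ^ 2 ≤ ∑ k, q k ^ m * d k ^ 2) :
    ∀ k, p k = (∑ l, ((d k ^ 2) / (d l ^ 2)) ^ ((1 : ℝ) / (m - 1)))⁻¹ :=
  minimizer_unique_eq_phat_general K m hm d hd p hp hmin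
end

section
/- Suppose d_k > 0 for every k = 1,…,K. Then the minimum of f_d over the probability simplex Δ_K equals (Σ_{k=1}^K d_k^{-2/(m-1)})^{1-m}. -/
/-!
Radon's inequality `(∑ xᵢ)^m / (∑ aᵢ)^(m-1) ≤ ∑ xᵢ^m / aᵢ^(m-1)`, a rescaled weighted Hölder
inequality, applied with `aᵢ = wᵢ^(-1/(m-1))` turns `∑ pᵢ^m wᵢ` into `∑ pᵢ^m / aᵢ^(m-1)` and bounds
it below by `(∑ aᵢ)^(1-m)` on the simplex. Equality holds at `p = a / ∑ aᵢ`.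
-/

open Finset Real

theorem rpow_sum_div_le_sum_rpow_div {ι : Type*} (s : Finset ι) {m : ℝ} (hm : 1 ≤ m)
    {x a : ι → ℝ} (hx : ∀ i, 0 ≤ x i) (ha : ∀ i, 0 < a i) :
    (∑ i ∈ s, x i) ^ m / (∑ i ∈ s, a i) ^ (m - 1) ≤ ∑ i ∈ s, x i ^ m / a i ^ (m - 1) := by
  have hm0 : m ≠ 0 := by positivity
  have hA : 0 ≤ ∑ i ∈ s, a i := sum_nonneg fun i _ ↦ (ha i).le
  have hT : 0 ≤ ∑ i ∈ s, x i ^ m / a i ^ (m - 1) :=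
    sum_nonneg fun i _ ↦ div_nonneg (rpow_nonneg (hx i) _) (rpow_nonneg (ha i).le _)
  have hterm : ∀ i, a i * (x i / a i) ^ m = x i ^ m / a i ^ (m - 1) := fun i ↦ by
    rw [div_rpow (hx i) (ha i).le, rpow_sub_one (ha i).ne']
    field_simp
  have holder := inner_le_weight_mul_Lp_of_nonneg s hm a (fun i ↦ x i / a i) (fun i ↦ (ha i).le)
    fun i ↦ div_nonneg (hx i) (ha i).le
  simp only [mul_div_cancel₀ _ (ha _).ne', hterm] at holder
  refine div_le_of_le_mul₀ (rpow_nonneg hA _) hT ?_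
  calc (∑ i ∈ s, x i) ^ m
      ≤ ((∑ i ∈ s, a i) ^ (1 - m⁻¹) * (∑ i ∈ s, x i ^ m / a i ^ (m - 1)) ^ m⁻¹) ^ m :=
        rpow_le_rpow (sum_nonneg fun i _ ↦ hx i) holder (by positivity)
    _ = (∑ i ∈ s, x i ^ m / a i ^ (m - 1)) * (∑ i ∈ s, a i) ^ (m - 1) := by
        rw [mul_rpow (rpow_nonneg hA _) (rpow_nonneg hT _), ← rpow_mul hA, ← rpow_mul hT,
          inv_mul_cancel₀ hm0, rpow_one, sub_mul, inv_mul_cancel₀ hm0, one_mul, mul_comm]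

theorem stdSimplex_eq_setOf_mem_Icc {𝕜 ι : Type*} [Semiring 𝕜] [PartialOrder 𝕜]
    [IsOrderedAddMonoid 𝕜] [Fintype ι] :
    stdSimplex 𝕜 ι = {p | (∀ i, 0 ≤ p i ∧ p i ≤ 1) ∧ ∑ i, p i = 1} := by
  ext p
  exact ⟨fun hp ↦ ⟨mem_Icc_of_mem_stdSimplex hp, hp.2⟩, fun hp ↦ ⟨fun i ↦ (hp.1 i).1, hp.2⟩⟩

theorem isLeast_sum_rpow_mul_stdSimplex {ι : Type*} [Fintype ι] [Nonempty ι] {m : ℝ} (hm : 1 < m)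
    {w : ι → ℝ} (hw : ∀ i, 0 < w i) :
    IsLeast ((fun p ↦ ∑ i, p i ^ m * w i) '' stdSimplex ℝ ι)
      ((∑ i, w i ^ (-(m - 1)⁻¹)) ^ (1 - m)) := by
  set c : ι → ℝ := fun i ↦ w i ^ (-(m - 1)⁻¹)
  set S := ∑ i, c i
  have hc : ∀ i, 0 < c i := fun i ↦ rpow_pos_of_pos (hw i) _
  have hS : 0 < S := sum_pos (fun i _ ↦ hc i) univ_nonempty
  have hcw : ∀ i, c i ^ (m - 1) = (w i)⁻¹ := fun i ↦ by
    rw [← rpow_mul (hw i).le, neg_mul, inv_mul_cancel₀ (by linarith), rpow_neg_one]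
  constructor
  · refine ⟨fun i ↦ c i / S, ⟨fun i ↦ div_nonneg (hc i).le hS.le, ?_⟩, ?_⟩
    · rw [← sum_div, div_self hS.ne']
    · have hcm : ∀ i, c i ^ m * w i = c i := fun i ↦ by
        rw [← sub_add_cancel m 1, rpow_add_one (hc i).ne', hcw]
        field_simp [(hw i).ne']
      simp only [div_rpow (hc _).le hS.le, div_mul_eq_mul_div, hcm, ← sum_div]
      rw [rpow_sub hS, rpow_one]
  · rintro _ ⟨p, ⟨hp, hp_sum⟩, rfl⟩
    have radon := rpow_sum_div_le_sum_rpow_div univ hm.le hp hc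
    simp only [hp_sum, one_rpow, hcw, div_inv_eq_mul] at radon
    rwa [show 1 - m = -(m - 1) by ring, rpow_neg hS.le, inv_eq_one_div]

/-- For positive `d`, the minimum of `f_d` over the probability simplex
equals `(Σ_k d_k^{-2/(m-1)})^{1-m}`. -/
theorem min_fd_eq
    (K : ℕ) (hK : 1 ≤ K) (m : ℝ) (hm : 1 < m)
    (d : Fin K → ℝ) (hd : ∀ k, 0 < d k) :
    IsLeast ((fun p : Fin K → ℝ => ∑ k, p k ^ m * d k ^ 2) ''
        {p | (∀ k, 0 ≤ p k ∧ p k ≤ 1) ∧ ∑ k, p k = 1})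
      ((∑ k, d k ^ ((-2 : ℝ) / (m - 1))) ^ (1 - m)) := by
  have : Nonempty (Fin K) := ⟨⟨0, hK⟩⟩
  have hexp : ∀ k, d k ^ ((-2 : ℝ) / (m - 1)) = (d k ^ 2) ^ (-(m - 1)⁻¹) := fun k ↦ by
    rw [← rpow_natCast_mul (hd k).le]
    congr 1
    push_cast
    ring
  simp_rw [← stdSimplex_eq_setOf_mem_Icc, hexp]
  exact isLeast_sum_rpow_mul_stdSimplex hm fun k ↦ pow_pos (hd k) 2
end

section
/- Suppose |R| ≥ K. Then a feasible matrix P̂ = [p̂_{k,i}] is a global minimizer of F over the set of feasible matrices if and only if: (i) for every i ∈ R and every k, p̂_{k,i} = [Σ_{l=1}^K (d_{k,i}²/d_{l,i}²)^{1/(m-1)}]^{-1}; and (ii) for every i ∉ R, p̂_{k,i} = 0 for every k with d_{k,i} > 0 (and consequently the unit total mass Σ_k p̂_{k,i} = 1 is distributed arbitrarily among the indices k with d_{k,i} = 0). -/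
/-!
`F` is a sum over the columns `i` of costs `∑ₖ pₖ ^ m wₖ` with weights `wₖ = d_{k,i}²`, each to be
minimized over the standard simplex. If all weights of a column are positive, the stated formula
satisfies the Lagrange condition `pₖ ^ (m - 1) wₖ = const`; since `x ↦ x ^ m` lies strictly above
its tangent lines, it is then the unique minimizer. If some weight vanishes, the minimum is `0`,
attained exactly by the vectors vanishing where the weight is positive. As some column has only
positive weights, columnwise minimizers assemble into a feasible matrix (its rows have positive
sums), and therefore a feasible matrix minimizes `F` iff each of its columns is a column minimizer.
-/

open Finset

theorem add_mul_rpow_sub_one_mul_sub_lt_rpow {m c x : ℝ} (hm : 1 < m) (hc : 0 < c) (hx : 0 ≤ x)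
    (hxc : x ≠ c) : c ^ m + m * c ^ (m - 1) * (x - c) < x ^ m := by
  -- Bernoulli's inequality for `(1 + s) ^ m` with `s = x / c - 1`, rescaled by `c ^ m`.
  have hs : -1 ≤ x / c - 1 := by linarith [div_nonneg hx hc.le]
  have hs0 : x / c - 1 ≠ 0 := sub_ne_zero.2 fun h => hxc ((div_eq_one_iff_eq hc.ne').1 h)
  have bernoulli := one_add_mul_self_lt_rpow_one_add hs hs0 hm
  rw [add_sub_cancel, Real.div_rpow hx hc.le] at bernoulli
  have hcm : 0 < c ^ m := Real.rpow_pos_of_pos hc m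
  calc c ^ m + m * c ^ (m - 1) * (x - c) = c ^ m * (1 + m * (x / c - 1)) := by
        rw [Real.rpow_sub_one hc.ne']; field_simp
    _ < c ^ m * (x ^ m / c ^ m) := mul_lt_mul_of_pos_left bernoulli hcm
    _ = x ^ m := mul_div_cancel₀ _ hcm.ne'

section Column

variable {ι : Type*} [Fintype ι]

noncomputable def membershipCost (m : ℝ) (w p : ι → ℝ) : ℝ := ∑ k, p k ^ m * w k

noncomputable def optimalMembership (m : ℝ) (w : ι → ℝ) (k : ι) : ℝ :=
  (∑ l, (w k / w l) ^ ((1 : ℝ) / (m - 1)))⁻¹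

theorem membershipCost_lt_of_rpow_sub_one_mul_eq {m μ : ℝ} {w c p : ι → ℝ} (hm : 1 < m)
    (hw : ∀ k, 0 < w k) (hc : ∀ k, 0 < c k) (hμ : ∀ k, c k ^ (m - 1) * w k = μ)
    (hp : ∀ k, 0 ≤ p k) (hsum : ∑ k, p k = ∑ k, c k) (hpc : p ≠ c) :
    membershipCost m w c < membershipCost m w p := by
  have hfirst : ∑ k, m * c k ^ (m - 1) * (p k - c k) * w k = 0 := by
    simp_rw [mul_right_comm _ (p _ - c _), mul_assoc m, hμ, ← mul_sum, sum_sub_distrib, hsum,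
      sub_self, mul_zero]
  obtain ⟨k₀, hk₀⟩ := Function.ne_iff.1 hpc
  calc membershipCost m w c = ∑ k, (c k ^ m + m * c k ^ (m - 1) * (p k - c k)) * w k := by
        simp_rw [add_mul, sum_add_distrib, hfirst, add_zero, membershipCost]
    _ < membershipCost m w p := by
      refine sum_lt_sum (fun k _ => ?_) ⟨k₀, mem_univ _, ?_⟩
      · rcases eq_or_ne (p k) (c k) with h | h
        · rw [h, sub_self, mul_zero, add_zero]
        · exact mul_le_mul_of_nonneg_right
            (add_mul_rpow_sub_one_mul_sub_lt_rpow hm (hc k) (hp k) h).le (hw k).le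
      · exact mul_lt_mul_of_pos_right
          (add_mul_rpow_sub_one_mul_sub_lt_rpow hm (hc k₀) (hp k₀) hk₀) (hw k₀)

section OptimalMembership

variable {m : ℝ} {w : ι → ℝ}

theorem optimalMembership_eq (hw : ∀ k, 0 < w k) (k : ι) :
    optimalMembership m w k =
      (w k ^ (1 / (m - 1)))⁻¹ / ∑ l, (w l ^ (1 / (m - 1)))⁻¹ := by
  simp_rw [optimalMembership, Real.div_rpow (hw k).le (hw _).le, div_eq_mul_inv, ← mul_sum,
    mul_inv]

theorem optimalMembership_pos (hw : ∀ k, 0 < w k) (k : ι) : 0 < optimalMembership m w k :=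
  inv_pos.2 <| sum_pos' (fun l _ => (Real.rpow_pos_of_pos (div_pos (hw k) (hw l)) _).le)
    ⟨k, mem_univ k, by rw [div_self (hw k).ne', Real.one_rpow]; exact one_pos⟩

theorem optimalMembership_mem_stdSimplex [Nonempty ι] (hw : ∀ k, 0 < w k) :
    optimalMembership m w ∈ stdSimplex ℝ ι := by
  refine ⟨fun k => (optimalMembership_pos hw k).le, ?_⟩
  have hS : 0 < ∑ l, (w l ^ (1 / (m - 1)))⁻¹ :=
    sum_pos (fun l _ => inv_pos.2 (Real.rpow_pos_of_pos (hw l) _)) univ_nonempty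
  simp_rw [optimalMembership_eq hw, ← sum_div, div_self hS.ne']

-- The Lagrange condition of the minimization over the simplex.
theorem optimalMembership_rpow_sub_one_mul (hm : 1 < m) (hw : ∀ k, 0 < w k) (k : ι) :
    optimalMembership m w k ^ (m - 1) * w k =
      ((∑ l, (w l ^ (1 / (m - 1)))⁻¹) ^ (m - 1))⁻¹ := by
  have hm1 : m - 1 ≠ 0 := by linarith
  have hS : 0 ≤ ∑ l, (w l ^ (1 / (m - 1)))⁻¹ :=
    sum_nonneg fun l _ => (inv_pos.2 (Real.rpow_pos_of_pos (hw l) _)).le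
  have hwk : (w k ^ (1 / (m - 1))) ^ (m - 1) = w k := by
    rw [← Real.rpow_mul (hw k).le, one_div_mul_cancel hm1, Real.rpow_one]
  rw [optimalMembership_eq hw, Real.div_rpow (inv_nonneg.2 (Real.rpow_nonneg (hw k).le _)) hS,
    Real.inv_rpow (Real.rpow_nonneg (hw k).le _), hwk, div_mul_eq_mul_div,
    inv_mul_cancel₀ (hw k).ne', one_div]

theorem membershipCost_optimalMembership_lt [Nonempty ι] (hm : 1 < m) (hw : ∀ k, 0 < w k)
    {p : ι → ℝ} (hp : p ∈ stdSimplex ℝ ι) (hne : p ≠ optimalMembership m w) :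
    membershipCost m w (optimalMembership m w) < membershipCost m w p :=
  membershipCost_lt_of_rpow_sub_one_mul_eq hm hw (optimalMembership_pos hw)
    (optimalMembership_rpow_sub_one_mul hm hw) hp.1
    (by rw [hp.2, (optimalMembership_mem_stdSimplex hw).2]) hne

theorem isMinOn_membershipCost_iff_eq_optimalMembership (hm : 1 < m) (hw : ∀ k, 0 < w k)
    {p : ι → ℝ} (hp : p ∈ stdSimplex ℝ ι) :
    IsMinOn (membershipCost m w) (stdSimplex ℝ ι) p ↔ p = optimalMembership m w := by
  have : Nonempty ι := univ_nonempty_iff.1 <| nonempty_of_sum_ne_zero <| by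
    rw [hp.2]; exact one_ne_zero
  constructor
  · intro hmin
    by_contra hne
    exact (isMinOn_iff.1 hmin _ (optimalMembership_mem_stdSimplex hw)).not_gt
      (membershipCost_optimalMembership_lt hm hw hp hne)
  · rintro rfl
    refine isMinOn_iff.2 fun q hq => ?_
    rcases eq_or_ne q (optimalMembership m w) with rfl | hne
    · exact le_rfl
    · exact (membershipCost_optimalMembership_lt hm hw hq hne).le

end OptimalMembership

theorem membershipCost_nonneg {m : ℝ} {w p : ι → ℝ} (hw : ∀ k, 0 ≤ w k) (hp : ∀ k, 0 ≤ p k) :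
    0 ≤ membershipCost m w p :=
  sum_nonneg fun k _ => mul_nonneg (Real.rpow_nonneg (hp k) m) (hw k)

theorem membershipCost_eq_zero_iff {m : ℝ} (hm : 0 < m) {w p : ι → ℝ} (hw : ∀ k, 0 ≤ w k)
    (hp : ∀ k, 0 ≤ p k) : membershipCost m w p = 0 ↔ ∀ k, 0 < w k → p k = 0 := by
  rw [membershipCost, sum_eq_zero_iff_of_nonneg fun k _ =>
    mul_nonneg (Real.rpow_nonneg (hp k) m) (hw k)]
  refine ⟨fun h k hk => ?_, fun h k _ => ?_⟩
  · rcases mul_eq_zero.1 (h k (mem_univ k)) with hpk | hwk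
    · exact (Real.rpow_eq_zero (hp k) hm.ne').1 hpk
    · exact absurd hwk hk.ne'
  · rcases (hw k).lt_or_eq with hk | hk
    · rw [h k hk, Real.zero_rpow hm.ne', zero_mul]
    · rw [← hk, mul_zero]

theorem isMinOn_membershipCost_iff_of_eq_zero {m : ℝ} (hm : 0 < m) {w : ι → ℝ}
    (hw : ∀ k, 0 ≤ w k) {k₀ : ι} (hk₀ : w k₀ = 0) {p : ι → ℝ} (hp : p ∈ stdSimplex ℝ ι) :
    IsMinOn (membershipCost m w) (stdSimplex ℝ ι) p ↔ ∀ k, 0 < w k → p k = 0 := by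
  classical
  have hzero : membershipCost m w (Pi.single k₀ 1) = 0 :=
    (membershipCost_eq_zero_iff hm hw (single_mem_stdSimplex ℝ k₀).1).2 fun k hk =>
      Pi.single_eq_of_ne (by rintro rfl; exact hk.ne' hk₀) 1
  rw [← membershipCost_eq_zero_iff hm hw hp.1, isMinOn_iff]
  refine ⟨fun hmin => le_antisymm (hzero ▸ hmin _ (single_mem_stdSimplex ℝ k₀))
    (membershipCost_nonneg hw hp.1), fun h q hq => h ▸ membershipCost_nonneg hw hq.1⟩

theorem exists_isMinOn_membershipCost [Nonempty ι] {m : ℝ} (hm : 0 ≤ m) (w : ι → ℝ) :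
    ∃ q ∈ stdSimplex ℝ ι, IsMinOn (membershipCost m w) (stdSimplex ℝ ι) q := by
  classical
  refine (isCompact_stdSimplex ℝ ι).exists_isMinOn
    ⟨_, single_mem_stdSimplex ℝ (Classical.arbitrary ι)⟩ ?_
  exact (continuous_finsetSum _ fun k _ =>
    ((Real.continuous_rpow_const hm).comp (continuous_apply k)).mul continuous_const).continuousOn

end Column

theorem isMinOn_sum_iff_forall_isMinOn {κ ι β : Type*} [Fintype ι] [AddCommMonoid β]
    [PartialOrder β] [IsOrderedCancelAddMonoid β] {S : Set (κ → ι → β)} {C : Set (κ → β)}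
    (f : ι → (κ → β) → β) (hSC : ∀ P ∈ S, ∀ i, (fun k => P k i) ∈ C) {Q : κ → ι → β}
    (hQ : Q ∈ S) (hQmin : ∀ i, IsMinOn (f i) C fun k => Q k i) {P : κ → ι → β} (hP : P ∈ S) :
    IsMinOn (fun P => ∑ i, f i fun k => P k i) S P ↔ ∀ i, IsMinOn (f i) C fun k => P k i := by
  refine ⟨fun hPmin i => ?_, fun hPmin => isMinOn_iff.2 fun P' hP' =>
    sum_le_sum fun i _ => isMinOn_iff.1 (hPmin i) _ (hSC P' hP' i)⟩
  have hQP : ∀ i, f i (fun k => Q k i) ≤ f i (fun k => P k i) :=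
    fun i => isMinOn_iff.1 (hQmin i) _ (hSC P hP i)
  have hsum : ∑ i, f i (fun k => Q k i) = ∑ i, f i (fun k => P k i) :=
    le_antisymm (sum_le_sum fun i _ => hQP i) (isMinOn_iff.1 hPmin Q hQ)
  have hcol := (sum_eq_sum_iff_of_le fun i _ => hQP i).1 hsum i (mem_univ i)
  exact isMinOn_iff.2 fun q hq => hcol ▸ isMinOn_iff.1 (hQmin i) q hq

section Feasible

variable {κ ι : Type*} [Fintype κ] [Fintype ι]

def IsFeasible (P : κ → ι → ℝ) : Prop :=
  (∀ k i, P k i ∈ Set.Icc (0 : ℝ) 1) ∧ (∀ i, ∑ k, P k i = 1) ∧ (∀ k, 0 < ∑ i, P k i)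

theorem IsFeasible.column_mem_stdSimplex {P : κ → ι → ℝ} (hP : IsFeasible P) (i : ι) :
    (fun k => P k i) ∈ stdSimplex ℝ κ :=
  ⟨fun k => (hP.1 k i).1, hP.2.1 i⟩

theorem exists_isFeasible_forall_isMinOn [Nonempty κ] {m : ℝ} (hm : 1 < m) (w : κ → ι → ℝ)
    {i₀ : ι} (hi₀ : ∀ k, 0 < w k i₀) :
    ∃ Q : κ → ι → ℝ, IsFeasible Q ∧
      ∀ i, IsMinOn (membershipCost m fun k => w k i) (stdSimplex ℝ κ) fun k => Q k i := by
  choose q hq hqmin using fun i => exists_isMinOn_membershipCost (zero_le_one.trans hm.le)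
    fun k => w k i
  have hqi₀ : q i₀ = optimalMembership m fun k => w k i₀ :=
    (isMinOn_membershipCost_iff_eq_optimalMembership hm hi₀ (hq i₀)).1 (hqmin i₀)
  refine ⟨fun k i => q i k, ⟨fun k i => mem_Icc_of_mem_stdSimplex (hq i) k, fun i => (hq i).2,
    fun k => ?_⟩, hqmin⟩
  calc 0 < q i₀ k := hqi₀ ▸ optimalMembership_pos hi₀ k
    _ ≤ ∑ i, q i k := single_le_sum (fun i _ => (hq i).1 k) (mem_univ i₀)

end Feasible

theorem feasible_isMinOn_iff_general
    (K N : ℕ) (hK : 1 ≤ K) (m : ℝ) (hm : 1 < m)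
    (d : Fin K → Fin N → ℝ) (hd : ∀ k i, 0 ≤ d k i)
    (hR : K ≤ (Finset.univ.filter fun i : Fin N => ∀ k, 0 < d k i).card)
    (Phat : Fin K → Fin N → ℝ)
    (hfeas : (∀ k i, Phat k i ∈ Set.Icc (0 : ℝ) 1) ∧ (∀ i, ∑ k, Phat k i = 1) ∧
      (∀ k, 0 < ∑ i, Phat k i)) :
    ((∀ P : Fin K → Fin N → ℝ,
        ((∀ k i, P k i ∈ Set.Icc (0 : ℝ) 1) ∧ (∀ i, ∑ k, P k i = 1) ∧
          (∀ k, 0 < ∑ i, P k i)) →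
        ∑ i, ∑ k, Phat k i ^ m * d k i ^ 2 ≤ ∑ i, ∑ k, P k i ^ m * d k i ^ 2) ↔
      ((∀ i, (∀ k, 0 < d k i) → ∀ k,
          Phat k i = (∑ l, ((d k i ^ 2) / (d l i ^ 2)) ^ ((1 : ℝ) / (m - 1)))⁻¹) ∧
        (∀ i, ¬ (∀ k, 0 < d k i) → ∀ k, 0 < d k i → Phat k i = 0))) := by
  have : Nonempty (Fin K) := ⟨⟨0, hK⟩⟩
  obtain ⟨i₀, hi₀⟩ := card_pos.1 (hK.trans hR)
  obtain ⟨Q, hQ, hQmin⟩ := exists_isFeasible_forall_isMinOn hm (fun k i => d k i ^ 2)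
    fun k => pow_pos ((mem_filter.1 hi₀).2 k) 2
  have hPhat : IsFeasible Phat := hfeas
  refine isMinOn_iff.symm.trans <| (isMinOn_sum_iff_forall_isMinOn _
    (fun _ hP => IsFeasible.column_mem_stdSimplex hP) hQ hQmin hPhat).trans ?_
  rw [← forall_and]
  refine forall_congr' fun i => ?_
  have hsq : ∀ k, 0 < d k i ^ 2 ↔ 0 < d k i := fun k => sq_pos_iff.trans (hd k i).lt_iff_ne'.symm
  by_cases hi : ∀ k, 0 < d k i
  · simp only [hi, not_true, false_imp_iff, implies_true, and_true, forall_const]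
    exact (isMinOn_membershipCost_iff_eq_optimalMembership hm (fun k => (hsq k).2 (hi k))
      (hPhat.column_mem_stdSimplex i)).trans funext_iff
  · obtain ⟨k₀, hk₀⟩ := not_forall.1 hi
    have hdk₀ : d k₀ i ^ 2 = 0 := by rw [(not_lt.1 hk₀).antisymm (hd k₀ i), zero_pow two_ne_zero]
    simp only [hi, false_imp_iff, not_false_eq_true, true_imp_iff, true_and]
    rw [isMinOn_membershipCost_iff_of_eq_zero (w := fun k => d k i ^ 2) (zero_lt_one.trans hm)
      (fun k => sq_nonneg _) hdk₀ (hPhat.column_mem_stdSimplex i)]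
    simp only [hsq]

/-- With `|R| ≥ K` (where `R = {i : d_{k,i} > 0 ∀k}`), a feasible membership
matrix `P̂` globally minimizes `F(P) = Σ_i Σ_k p_{k,i}^m d_{k,i}²` over feasible matrices
iff (i) for `i ∈ R` it is given by the explicit formula, and (ii) for `i ∉ R` it vanishes
on every `k` with `d_{k,i} > 0`. -/
theorem feasible_isMinOn_iff
    (K N : ℕ) (hK : 1 ≤ K) (hN : 1 ≤ N) (m : ℝ) (hm : 1 < m)
    (d : Fin K → Fin N → ℝ) (hd : ∀ k i, 0 ≤ d k i)
    (hR : K ≤ (Finset.univ.filter fun i : Fin N => ∀ k, 0 < d k i).card)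
    (Phat : Fin K → Fin N → ℝ)
    (hfeas : (∀ k i, Phat k i ∈ Set.Icc (0 : ℝ) 1) ∧ (∀ i, ∑ k, Phat k i = 1) ∧
      (∀ k, 0 < ∑ i, Phat k i)) :
    ((∀ P : Fin K → Fin N → ℝ,
        ((∀ k i, P k i ∈ Set.Icc (0 : ℝ) 1) ∧ (∀ i, ∑ k, P k i = 1) ∧
          (∀ k, 0 < ∑ i, P k i)) →
        ∑ i, ∑ k, Phat k i ^ m * d k i ^ 2 ≤ ∑ i, ∑ k, P k i ^ m * d k i ^ 2) ↔
      ((∀ i, (∀ k, 0 < d k i) → ∀ k,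
          Phat k i = (∑ l, ((d k i ^ 2) / (d l i ^ 2)) ^ ((1 : ℝ) / (m - 1)))⁻¹) ∧
        (∀ i, ¬ (∀ k, 0 < d k i) → ∀ k, 0 < d k i → Phat k i = 0))) :=
  feasible_isMinOn_iff_general K N hK m hm d hd hR Phat hfeas
end

section
/- Suppose |R| ≥ K. Then the minimum of F over the set of feasible matrices equals Σ_{i ∈ R} (Σ_{k=1}^K d_{k,i}^{-2/(m-1)})^{1-m}. -/
/-!
The problem decouples over the columns `i`. If all `d k i > 0`, put `c k = d k i ^ (-2 / (m - 1))`,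
so that `c k ^ (1 - m) = d k i ^ 2`; Jensen's inequality for `x ↦ x ^ m` with weights
`c k / ∑ c` at the points `p k / c k` gives `(∑ c) ^ (1 - m) ≤ ∑ p k ^ m * c k ^ (1 - m)`, with
equality at `p = c / ∑ c`. A column with some `d k i = 0` costs nothing once all its mass sits on
that `k`. The optimal columns for `i ∈ R` are strictly positive, so a single point of `R` makes
every row sum of the assembled matrix positive.
-/

open Finset

namespace Real

variable {ι : Type*} [Fintype ι] {m : ℝ}

theorem sum_rpow_one_sub_le_sum_rpow_mul (hm : 1 ≤ m) {c p : ι → ℝ} (hc : ∀ i, 0 < c i)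
    (hp : ∀ i, 0 ≤ p i) (hp₁ : ∑ i, p i = 1) :
    (∑ i, c i) ^ (1 - m) ≤ ∑ i, p i ^ m * c i ^ (1 - m) := by
  have : Nonempty ι := by
    by_contra h
    simp [not_nonempty_iff.mp h] at hp₁
  set S := ∑ i, c i
  have hS : 0 < S := sum_pos (fun i _ => hc i) univ_nonempty
  have hw : ∑ i, c i / S = 1 := by rw [← sum_div, div_self hS.ne']
  have hmean : ∑ i, c i / S * (p i / c i) = S⁻¹ := by
    simp_rw [div_mul_div_comm, mul_comm (c _), ← div_mul_div_comm, div_self (hc _).ne', mul_one,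
      ← sum_div, hp₁, one_div]
  have jensen := rpow_arith_mean_le_arith_mean_rpow univ (fun i => c i / S) (fun i => p i / c i)
    (fun i _ => (div_pos (hc i) hS).le) hw (fun i _ => div_nonneg (hp i) (hc i).le) hm
  rw [hmean] at jensen
  have key : ∀ i, c i / S * (p i / c i) ^ m = S⁻¹ * (p i ^ m * c i ^ (1 - m)) := by
    intro i
    rw [div_rpow (hp i) (hc i).le, rpow_sub (hc i), rpow_one]
    field_simp
  simp_rw [key, ← mul_sum] at jensen
  calc S ^ (1 - m) = S * S⁻¹ ^ m := by
        rw [inv_rpow hS.le, rpow_sub hS, rpow_one, div_eq_mul_inv]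
    _ ≤ S * (S⁻¹ * ∑ i, p i ^ m * c i ^ (1 - m)) := mul_le_mul_of_nonneg_left jensen hS.le
    _ = _ := by rw [← mul_assoc, mul_inv_cancel₀ hS.ne', one_mul]

theorem sum_div_sum_rpow_mul_rpow_one_sub [Nonempty ι] {c : ι → ℝ} (hc : ∀ i, 0 < c i) :
    ∑ i, (c i / ∑ j, c j) ^ m * c i ^ (1 - m) = (∑ i, c i) ^ (1 - m) := by
  set S := ∑ i, c i
  have hS : 0 < S := sum_pos (fun i _ => hc i) univ_nonempty
  have key : ∀ i, (c i / S) ^ m * c i ^ (1 - m) = c i / S ^ m := by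
    intro i
    rw [div_rpow (hc i).le hS.le, div_mul_eq_mul_div, ← rpow_add (hc i), add_sub_cancel, rpow_one]
  rw [sum_congr rfl fun i _ => key i, ← sum_div, rpow_sub hS, rpow_one]

theorem rpow_neg_two_div_rpow_one_sub {x : ℝ} (hx : 0 ≤ x) (hm : m ≠ 1) :
    (x ^ ((-2 : ℝ) / (m - 1))) ^ (1 - m) = x ^ 2 := by
  have : (-2 : ℝ) / (m - 1) * (1 - m) = 2 := by
    field_simp [sub_ne_zero.mpr hm]
    ring
  rw [← rpow_mul hx, this, rpow_two]

end Real

section Column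

variable {ι : Type*} [Fintype ι] {m : ℝ}

noncomputable def columnMin (m : ℝ) (d : ι → ℝ) : ℝ :=
  if ∀ k, 0 < d k then (∑ k, d k ^ ((-2 : ℝ) / (m - 1))) ^ (1 - m) else 0

theorem columnMin_le_sum (hm : 1 < m) {d p : ι → ℝ} (hd : ∀ k, 0 ≤ d k) (hp : ∀ k, 0 ≤ p k)
    (hp₁ : ∑ k, p k = 1) : columnMin m d ≤ ∑ k, p k ^ m * d k ^ 2 := by
  unfold columnMin
  split_ifs with hpos
  · calc (∑ k, d k ^ ((-2 : ℝ) / (m - 1))) ^ (1 - m)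
        ≤ ∑ k, p k ^ m * (d k ^ ((-2 : ℝ) / (m - 1))) ^ (1 - m) :=
          Real.sum_rpow_one_sub_le_sum_rpow_mul hm.le
            (fun k => Real.rpow_pos_of_pos (hpos k) _) hp hp₁
      _ = ∑ k, p k ^ m * d k ^ 2 := by
          simp_rw [Real.rpow_neg_two_div_rpow_one_sub (hd _) hm.ne']
  · exact sum_nonneg fun k _ => mul_nonneg (Real.rpow_nonneg (hp k) _) (sq_nonneg _)

theorem exists_sum_rpow_mul_eq_columnMin [Nonempty ι] (hm : 1 < m) {d : ι → ℝ}
    (hd : ∀ k, 0 ≤ d k) :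
    ∃ p : ι → ℝ, (∀ k, 0 ≤ p k) ∧ ∑ k, p k = 1 ∧ ((∀ k, 0 < d k) → ∀ k, 0 < p k) ∧
      ∑ k, p k ^ m * d k ^ 2 = columnMin m d := by
  classical
  unfold columnMin
  split_ifs with hpos
  · set c := fun k => d k ^ ((-2 : ℝ) / (m - 1))
    have hc : ∀ k, 0 < c k := fun k => Real.rpow_pos_of_pos (hpos k) _
    have hS : 0 < ∑ k, c k := sum_pos (fun k _ => hc k) univ_nonempty
    refine ⟨fun k => c k / ∑ j, c j, fun k => (div_pos (hc k) hS).le, ?_,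
      fun _ k => div_pos (hc k) hS, ?_⟩
    · rw [← sum_div, div_self hS.ne']
    · rw [← Real.sum_div_sum_rpow_mul_rpow_one_sub hc]
      simp_rw [c, Real.rpow_neg_two_div_rpow_one_sub (hd _) hm.ne']
  · obtain ⟨k₀, hk₀⟩ := not_forall.mp hpos
    refine ⟨Pi.single k₀ 1, fun k => ?_, by simp, fun h => absurd (h k₀) hk₀, ?_⟩
    · by_cases hk : k = k₀ <;> simp [hk]
    · refine sum_eq_zero fun k _ => ?_
      by_cases hk : k = k₀
      · simp [hk, le_antisymm (not_lt.mp hk₀) (hd k₀)]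
      · simp [hk, Real.zero_rpow (by linarith : m ≠ 0)]

end Column

theorem min_F_eq_general
    (K N : ℕ) (hK : 1 ≤ K) (m : ℝ) (hm : 1 < m)
    (d : Fin K → Fin N → ℝ) (hd : ∀ k i, 0 ≤ d k i)
    (hR : K ≤ (Finset.univ.filter fun i : Fin N => ∀ k, 0 < d k i).card) :
    IsLeast ((fun P : Fin K → Fin N → ℝ => ∑ i, ∑ k, P k i ^ m * d k i ^ 2) ''
        {P | (∀ k i, P k i ∈ Set.Icc (0 : ℝ) 1) ∧ (∀ i, ∑ k, P k i = 1) ∧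
          (∀ k, 0 < ∑ i, P k i)})
      (∑ i ∈ Finset.univ.filter fun i : Fin N => ∀ k, 0 < d k i,
        (∑ k, d k i ^ ((-2 : ℝ) / (m - 1))) ^ (1 - m)) := by
  have : Nonempty (Fin K) := ⟨⟨0, hK⟩⟩
  obtain ⟨i₀, hi₀⟩ := card_pos.mp (hK.trans hR)
  have hmin : ∑ i ∈ univ.filter (fun i => ∀ k, 0 < d k i),
      (∑ k, d k i ^ ((-2 : ℝ) / (m - 1))) ^ (1 - m) = ∑ i, columnMin m fun k => d k i := by
    simp only [sum_filter, columnMin]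
  rw [hmin]
  choose p hp₀ hp₁ hp_pos hp_eq using
    fun i => exists_sum_rpow_mul_eq_columnMin hm fun k => hd k i
  refine ⟨⟨fun k i => p i k, ⟨fun k i => ⟨hp₀ i k, ?_⟩, hp₁, fun k => ?_⟩,
    sum_congr rfl fun i _ => hp_eq i⟩, ?_⟩
  · exact (single_le_sum (fun j _ => hp₀ i j) (mem_univ k)).trans_eq (hp₁ i)
  · exact sum_pos' (fun i _ => hp₀ i k) ⟨i₀, mem_univ _, hp_pos i₀ (mem_filter.mp hi₀).2 k⟩
  · rintro _ ⟨P, ⟨hP, hP₁, -⟩, rfl⟩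
    exact sum_le_sum fun i _ =>
      columnMin_le_sum hm (fun k => hd k i) (fun k => (hP k i).1) (hP₁ i)

/-- With `|R| ≥ K`, the minimum of `F` over feasible membership matrices
equals `Σ_{i ∈ R} (Σ_k d_{k,i}^{-2/(m-1)})^{1-m}`. -/
theorem min_F_eq
    (K N : ℕ) (hK : 1 ≤ K) (hN : 1 ≤ N) (m : ℝ) (hm : 1 < m)
    (d : Fin K → Fin N → ℝ) (hd : ∀ k i, 0 ≤ d k i)
    (hR : K ≤ (Finset.univ.filter fun i : Fin N => ∀ k, 0 < d k i).card) :
    IsLeast ((fun P : Fin K → Fin N → ℝ => ∑ i, ∑ k, P k i ^ m * d k i ^ 2) ''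
        {P | (∀ k i, P k i ∈ Set.Icc (0 : ℝ) 1) ∧ (∀ i, ∑ k, P k i = 1) ∧
          (∀ k, 0 < ∑ i, P k i)})
      (∑ i ∈ Finset.univ.filter fun i : Fin N => ∀ k, 0 < d k i,
        (∑ k, d k i ^ ((-2 : ℝ) / (m - 1))) ^ (1 - m)) :=
  min_F_eq_general K N hK m hm d hd hR
end

section
/- The functional J_m is continuous as a map from [0,1]^{K×N} × ℝ^{K×N} × Π_{k=1}^K L²((0,c_k), ℝ^d) to ℝ, where the domain carries the product topology (Euclidean topology on the membership-matrix and shift-matrix factors, and the L²-norm topology on each cluster-center factor). -/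
/-!
Translation `s ↦ x(· + s)` is continuous into `L²(ℝ)` (the regular representation is strongly
continuous), and restricting to `(0, c)` is `1`-Lipschitz, so each shift `s ↦ x̃_s|_{(0,c)}` is
continuous into `L²((0,c))`. Every summand of `J_m` is then a composition of continuous maps;
`p ↦ p ^ m` is continuous on `[0, ∞)` because `m ≥ 0`.
-/

open MeasureTheory
open scoped ENNReal

namespace MeasureTheory.Lp

variable {X E : Type*} [MeasurableSpace X] [NormedAddCommGroup E] {p : ℝ≥0∞} {μ : Measure X}

theorem norm_sub_le_of_ae_eq_restrict {A : Set X} {f g : Lp E p (μ.restrict A)}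
    {F G : Lp E p μ} (hf : f =ᵐ[μ.restrict A] F) (hg : g =ᵐ[μ.restrict A] G) :
    ‖f - g‖ ≤ ‖F - G‖ := by
  rw [norm_def, norm_def]
  refine ENNReal.toReal_mono (eLpNorm_ne_top _) ?_
  calc eLpNorm (⇑(f - g)) p (μ.restrict A)
      = eLpNorm (⇑(F - G)) p (μ.restrict A) :=
        eLpNorm_congr_ae <| (coeFn_sub f g).trans <| (hf.sub hg).trans <|
          Filter.EventuallyEq.symm (ae_restrict_of_ae (coeFn_sub F G))
    _ ≤ eLpNorm (⇑(F - G)) p μ := eLpNorm_mono_measure _ Measure.restrict_le_self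

theorem continuous_of_ae_eq_restrict [Fact (1 ≤ p)] {Z : Type*} [TopologicalSpace Z] {A : Set X}
    {R : Z → Lp E p (μ.restrict A)} {F : Z → Lp E p μ} (hF : Continuous F)
    (hR : ∀ z, R z =ᵐ[μ.restrict A] F z) : Continuous R := by
  refine continuous_iff_continuousAt.mpr fun z₀ => ?_
  rw [ContinuousAt, tendsto_iff_norm_sub_tendsto_zero]
  exact squeeze_zero (fun _ => norm_nonneg _)
    (fun z => norm_sub_le_of_ae_eq_restrict (hR z) (hR z₀))
    (tendsto_iff_norm_sub_tendsto_zero.mp (hF.tendsto z₀))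

section Translate

variable [AddGroup X] [MeasurableAdd X] [μ.IsAddRightInvariant]

noncomputable def translate (s : X) (f : Lp E p μ) : Lp E p μ :=
  compMeasurePreserving (· + s) (measurePreserving_add_right μ s) f

theorem coeFn_translate (s : X) (f : Lp E p μ) : translate s f =ᵐ[μ] fun t => f (t + s) :=
  coeFn_compMeasurePreserving f _

theorem continuous_translate [Fact (1 ≤ p)] [TopologicalSpace X] [BorelSpace X] [R1Space X]
    [ContinuousAdd X] [IsLocallyFiniteMeasure μ] [μ.InnerRegularCompactLTTop]
    (hp : p ≠ ∞) (f : Lp E p μ) : Continuous fun s : X => translate s f :=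
  continuous_const.compMeasurePreservingLp (g := ContinuousMap.addRight)
    (ContinuousMap.continuous_of_continuous_uncurry _ (continuous_snd.add continuous_fst))
    (fun s => measurePreserving_add_right μ s) hp

end Translate

end MeasureTheory.Lp

theorem Jm_continuousOn_general
    (N K d : ℕ) (m : ℝ) (hm : 1 < m)
    (x : Fin N → Lp (EuclideanSpace ℝ (Fin d)) 2 (volume : Measure ℝ))
    (c : Fin K → ℝ)
    (Rr : (k : Fin K) → ℝ → Fin N →
      Lp (EuclideanSpace ℝ (Fin d)) 2 (volume.restrict (Set.Ioo (0 : ℝ) (c k))))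
    (hRr : ∀ k s i, ⇑(Rr k s i) =ᵐ[volume.restrict (Set.Ioo (0 : ℝ) (c k))]
      fun t => x i (t + s)) :
    ContinuousOn
      (fun y : (Fin K → Fin N → ℝ) × (Fin K → Fin N → ℝ) ×
          ((k : Fin K) →
            Lp (EuclideanSpace ℝ (Fin d)) 2 (volume.restrict (Set.Ioo (0 : ℝ) (c k)))) =>
        ∑ i, ∑ k, y.1 k i ^ m * ‖Rr k (y.2.1 k i) i - y.2.2 k‖ ^ 2)
      {y | ∀ k i, y.1 k i ∈ Set.Icc (0 : ℝ) 1} := by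
  have hshift : ∀ k i, Continuous fun s => Rr k s i := fun k i =>
    Lp.continuous_of_ae_eq_restrict (Lp.continuous_translate ENNReal.ofNat_ne_top (x i))
      fun s => (hRr k s i).trans <|
        Filter.EventuallyEq.symm (ae_restrict_of_ae (Lp.coeFn_translate s (x i)))
  exact Continuous.continuousOn (by fun_prop (disch := linarith))

/-- The functional
`J_m(P,S,v) = Σ_i Σ_k p_{k,i}^m ‖x̃_{i,s_{k,i}}|_{(0,c_k)} − v_k‖²` is continuous on
`[0,1]^{K×N} × ℝ^{K×N} × Π_k L²((0,c_k), ℝ^d)` with the product topology. Here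
`Rr k s i ∈ L²((0,c_k), ℝ^d)` denotes the restriction to `(0,c_k)` of the shifted
curve `t ↦ x_i(t+s)`, specified by its a.e. representation. -/
theorem Jm_continuousOn
    (N K d : ℕ) (hN : 1 ≤ N) (hK : 1 ≤ K) (hd : 1 ≤ d) (m : ℝ) (hm : 1 < m)
    (x : Fin N → Lp (EuclideanSpace ℝ (Fin d)) 2 (volume : Measure ℝ))
    (c : Fin K → ℝ) (hc : ∀ k, 0 < c k)
    (Rr : (k : Fin K) → ℝ → Fin N →
      Lp (EuclideanSpace ℝ (Fin d)) 2 (volume.restrict (Set.Ioo (0 : ℝ) (c k))))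
    (hRr : ∀ k s i, ⇑(Rr k s i) =ᵐ[volume.restrict (Set.Ioo (0 : ℝ) (c k))]
      fun t => x i (t + s)) :
    ContinuousOn
      (fun y : (Fin K → Fin N → ℝ) × (Fin K → Fin N → ℝ) ×
          ((k : Fin K) →
            Lp (EuclideanSpace ℝ (Fin d)) 2 (volume.restrict (Set.Ioo (0 : ℝ) (c k)))) =>
        ∑ i, ∑ k, y.1 k i ^ m * ‖Rr k (y.2.1 k i) i - y.2.2 k‖ ^ 2)
      {y | ∀ k i, y.1 k i ∈ Set.Icc (0 : ℝ) 1} :=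
  Jm_continuousOn_general N K d m hm x c Rr hRr
end

section
/- Let (P, S, v_1, …, v_K) be feasible. Perform one iteration of the probKMA map: (i) define new centers v'_k = (Σ_{i=1}^N p_{k,i}^m x̃_{i,s_{k,i}}|_{(0,c_k)})/(Σ_{i=1}^N p_{k,i}^m) (the denominators are positive since Σ_i p_{k,i} > 0); (ii) choose new shifts S' = [s'_{k,i}] such that ‖x̃_{i,s'_{k,i}}|_{(0,c_k)} − v'_k‖ ≤ ‖x̃_{i,s_{k,i}}|_{(0,c_k)} − v'_k‖ for every i and k; (iii) assuming d'_{k,i} := ‖x̃_{i,s'_{k,i}}|_{(0,c_k)} − v'_k‖ > 0 for all i,k, define P' by p'_{k,i} = [Σ_{l=1}^K ((d'_{k,i})²/(d'_{l,i})²)^{1/(m-1)}]^{-1}. Then (P', S', v'_1, …, v'_K) is feasible and J_m(P', S', v'_1, …, v'_K) ≤ J_m(P, S, v_1, …, v_K); that is, J_m descends along one iteration of the algorithm. -/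
open MeasureTheory Finset

/-!
Each update minimises `J_m` in one group of variables with the others fixed, so `J_m` can only
decrease along `(P, S, v) → (P, S, v') → (P, S', v') → (P', S', v')`. For the centres, the
weighted mean minimises a weighted sum of squared distances (Huygens–Steiner); for the shifts
this is the hypothesis on `S'`. For the memberships, the explicit formula makes
`p'ₖᵐ⁻¹ d'ₖ²` independent of `k`, which is the first-order condition for minimising the convex
function `p ↦ ∑ₖ pₖᵐ d'ₖ²` on the simplex; the tangent-line inequality for `t ↦ tᵐ` turns it
into global minimality.
-/

theorem Real.rpow_add_mul_rpow_sub_one_mul_sub_le_rpow_s13 {m s t : ℝ} (hm : 1 ≤ m) (hs : 0 < s)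
    (ht : 0 ≤ t) : s ^ m + m * s ^ (m - 1) * (t - s) ≤ t ^ m := by
  have bernoulli : 1 + m * (t / s - 1) ≤ (t / s) ^ m := by
    simpa using one_add_mul_self_le_rpow_one_add (s := t / s - 1)
      (by linarith [div_nonneg ht hs.le]) hm
  have hsm : 0 < s ^ m := Real.rpow_pos_of_pos hs m
  calc s ^ m + m * s ^ (m - 1) * (t - s) = s ^ m * (1 + m * (t / s - 1)) := by
        rw [Real.rpow_sub_one hs.ne']; field_simp
    _ ≤ s ^ m * (t / s) ^ m := mul_le_mul_of_nonneg_left bernoulli hsm.le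
    _ = t ^ m := by rw [Real.div_rpow ht hs.le]; field_simp

theorem Finset.sum_rpow_pos {ι : Type*} {s : Finset ι} {p : ι → ℝ} (hp : ∀ i ∈ s, 0 ≤ p i)
    (h : 0 < ∑ i ∈ s, p i) (m : ℝ) : 0 < ∑ i ∈ s, p i ^ m := by
  obtain ⟨i, hi, hpi⟩ := exists_lt_of_sum_lt (s := s) (f := 0) (g := p) (by simpa using h)
  exact sum_pos' (fun i hi => Real.rpow_nonneg (hp i hi) m) ⟨i, hi, Real.rpow_pos_of_pos hpi m⟩

theorem Finset.sum_smul_sub_centerMass {ι E : Type*} [AddCommGroup E] [Module ℝ E]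
    (s : Finset ι) {w : ι → ℝ} (hw : ∑ i ∈ s, w i ≠ 0) (z : ι → E) :
    ∑ i ∈ s, w i • (z i - s.centerMass w z) = 0 := by
  simp only [smul_sub, sum_sub_distrib, ← sum_smul]
  rw [centerMass, smul_smul, mul_inv_cancel₀ hw, one_smul, sub_self]

section CenterMass

variable {ι E : Type*} [NormedAddCommGroup E] [InnerProductSpace ℝ E]
  (s : Finset ι) {w : ι → ℝ} (z : ι → E) (v : E)

theorem Finset.sum_mul_norm_sub_sq_eq_centerMass (hw : ∑ i ∈ s, w i ≠ 0) :
    ∑ i ∈ s, w i * ‖z i - v‖ ^ 2 =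
      ∑ i ∈ s, w i * ‖z i - s.centerMass w z‖ ^ 2 +
        (∑ i ∈ s, w i) * ‖s.centerMass w z - v‖ ^ 2 := by
  set g := s.centerMass w z
  have cross : ∑ i ∈ s, w i * inner ℝ (z i - g) (g - v) = 0 := by
    have := congrArg (fun y => inner ℝ y (g - v)) (s.sum_smul_sub_centerMass hw z)
    simpa only [sum_inner, real_inner_smul_left, inner_zero_left] using this
  have split : ∀ i, w i * ‖z i - v‖ ^ 2 =
      w i * ‖z i - g‖ ^ 2 + 2 * (w i * inner ℝ (z i - g) (g - v)) + w i * ‖g - v‖ ^ 2 := by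
    intro i
    rw [← sub_add_sub_cancel (z i) g v, norm_add_sq_real]
    ring
  simp_rw [split, sum_add_distrib, ← mul_sum, cross, ← sum_mul]
  ring

theorem Finset.sum_mul_norm_sub_centerMass_sq_le (hw : 0 < ∑ i ∈ s, w i) :
    ∑ i ∈ s, w i * ‖z i - s.centerMass w z‖ ^ 2 ≤ ∑ i ∈ s, w i * ‖z i - v‖ ^ 2 := by
  rw [s.sum_mul_norm_sub_sq_eq_centerMass z v hw.ne']
  exact le_add_of_nonneg_right (by positivity)

end CenterMass

section FuzzyMembership

variable {ι : Type*} [Fintype ι] {m : ℝ} {a : ι → ℝ}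

/-- The fuzzy `c`-means membership formula, for squared distances `a` to the cluster centres. -/
noncomputable def fuzzyMembership (m : ℝ) (a : ι → ℝ) (k : ι) : ℝ :=
  (∑ l, (a k / a l) ^ (1 / (m - 1)))⁻¹

theorem fuzzyMembership_eq (ha : ∀ k, 0 < a k) (k : ι) :
    fuzzyMembership m a k =
      (a k ^ (1 / (m - 1)))⁻¹ * (∑ l, (a l ^ (1 / (m - 1)))⁻¹)⁻¹ := by
  simp_rw [fuzzyMembership, Real.div_rpow (ha k).le (ha _).le, div_eq_mul_inv, ← mul_sum,
    mul_inv]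

theorem fuzzyMembership_pos (ha : ∀ k, 0 < a k) (k : ι) : 0 < fuzzyMembership m a k := by
  rw [fuzzyMembership_eq ha]
  have hpow := fun l => Real.rpow_pos_of_pos (ha l) (1 / (m - 1))
  exact mul_pos (inv_pos.2 (hpow k))
    (inv_pos.2 (sum_pos (fun l _ => inv_pos.2 (hpow l)) ⟨k, mem_univ k⟩))

theorem sum_fuzzyMembership [Nonempty ι] (ha : ∀ k, 0 < a k) :
    ∑ k, fuzzyMembership m a k = 1 := by
  have hT : 0 < ∑ l, (a l ^ (1 / (m - 1)))⁻¹ :=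
    sum_pos (fun l _ => inv_pos.2 (Real.rpow_pos_of_pos (ha l) _)) univ_nonempty
  simp_rw [fuzzyMembership_eq ha, ← sum_mul, mul_inv_cancel₀ hT.ne']

theorem fuzzyMembership_le_one (ha : ∀ k, 0 < a k) (k : ι) : fuzzyMembership m a k ≤ 1 := by
  have : Nonempty ι := ⟨k⟩
  rw [← sum_fuzzyMembership (m := m) ha]
  exact single_le_sum (fun l _ => (fuzzyMembership_pos ha l).le) (mem_univ k)

theorem fuzzyMembership_rpow_sub_one_mul (hm : m ≠ 1) (ha : ∀ k, 0 < a k) (k : ι) :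
    fuzzyMembership m a k ^ (m - 1) * a k =
      ((∑ l, (a l ^ (1 / (m - 1)))⁻¹) ^ (m - 1))⁻¹ := by
  have hT : 0 ≤ ∑ l, (a l ^ (1 / (m - 1)))⁻¹ :=
    sum_nonneg fun l _ => inv_nonneg.2 (Real.rpow_nonneg (ha l).le _)
  have hak : (a k ^ (1 / (m - 1))) ^ (m - 1) = a k := by
    rw [← Real.rpow_mul (ha k).le, one_div_mul_cancel (sub_ne_zero.2 hm), Real.rpow_one]
  rw [fuzzyMembership_eq ha, Real.mul_rpow (inv_nonneg.2 (Real.rpow_nonneg (ha k).le _))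
    (inv_nonneg.2 hT), Real.inv_rpow (Real.rpow_nonneg (ha k).le _), Real.inv_rpow hT, hak,
    mul_right_comm, inv_mul_cancel₀ (ha k).ne', one_mul]

theorem sum_fuzzyMembership_rpow_mul_le [Nonempty ι] (hm : 1 < m) (ha : ∀ k, 0 < a k)
    {t : ι → ℝ} (ht : ∀ k, 0 ≤ t k) (ht1 : ∑ k, t k = 1) :
    ∑ k, fuzzyMembership m a k ^ m * a k ≤ ∑ k, t k ^ m * a k := by
  set q := fuzzyMembership m a
  set lam := ((∑ l, (a l ^ (1 / (m - 1)))⁻¹) ^ (m - 1))⁻¹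
  have tangent : ∀ k, q k ^ m * a k + m * lam * (t k - q k) ≤ t k ^ m * a k := fun k => by
    have hlam : lam = q k ^ (m - 1) * a k := (fuzzyMembership_rpow_sub_one_mul hm.ne' ha k).symm
    have := mul_le_mul_of_nonneg_right (Real.rpow_add_mul_rpow_sub_one_mul_sub_le_rpow_s13 hm.le
      (fuzzyMembership_pos (m := m) ha k) (ht k)) (ha k).le
    rw [hlam]
    linarith
  calc ∑ k, q k ^ m * a k = ∑ k, (q k ^ m * a k + m * lam * (t k - q k)) := by
        rw [sum_add_distrib, ← mul_sum, sum_sub_distrib, ht1, sum_fuzzyMembership ha,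
          sub_self, mul_zero, add_zero]
    _ ≤ ∑ k, t k ^ m * a k := sum_le_sum fun k _ => tangent k

end FuzzyMembership

theorem probKMA_iteration_descent_general
    (N K d : ℕ) (m : ℝ) (hm : 1 < m)
    (c : Fin K → ℝ)
    (Rr : (k : Fin K) → ℝ → Fin N →
      Lp (EuclideanSpace ℝ (Fin d)) 2 (volume.restrict (Set.Ioo (0 : ℝ) (c k))))
    (P S : Fin K → Fin N → ℝ)
    (hP01 : ∀ k i, P k i ∈ Set.Icc (0 : ℝ) 1)
    (hPcol : ∀ i, ∑ k, P k i = 1)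
    (hProw : ∀ k, 0 < ∑ i, P k i)
    (v v' : (k : Fin K) →
      Lp (EuclideanSpace ℝ (Fin d)) 2 (volume.restrict (Set.Ioo (0 : ℝ) (c k))))
    (hv' : ∀ k, v' k = (∑ i, P k i ^ m)⁻¹ • ∑ i, P k i ^ m • Rr k (S k i) i)
    (S' : Fin K → Fin N → ℝ)
    (hS' : ∀ k i, ‖Rr k (S' k i) i - v' k‖ ≤ ‖Rr k (S k i) i - v' k‖)
    (hdpos : ∀ k i, 0 < ‖Rr k (S' k i) i - v' k‖)
    (P' : Fin K → Fin N → ℝ)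
    (hP' : ∀ k i, P' k i =
      (∑ l, (‖Rr k (S' k i) i - v' k‖ ^ 2 / ‖Rr l (S' l i) i - v' l‖ ^ 2) ^
        ((1 : ℝ) / (m - 1)))⁻¹) :
    ((∀ k i, P' k i ∈ Set.Icc (0 : ℝ) 1) ∧ (∀ i, ∑ k, P' k i = 1) ∧
        (∀ k, 0 < ∑ i, P' k i)) ∧
      (∑ i, ∑ k, P' k i ^ m * ‖Rr k (S' k i) i - v' k‖ ^ 2) ≤
        ∑ i, ∑ k, P k i ^ m * ‖Rr k (S k i) i - v k‖ ^ 2 := by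
  have hP'eq : ∀ k i, P' k i = fuzzyMembership m (fun l => ‖Rr l (S' l i) i - v' l‖ ^ 2) k := hP'
  have hd : ∀ i l, 0 < ‖Rr l (S' l i) i - v' l‖ ^ 2 := fun i l => pow_pos (hdpos l i) 2
  have hK : ∀ i, Nonempty (Fin K) := fun i =>
    univ_nonempty_iff.1 (nonempty_of_sum_ne_zero ((hPcol i).trans_ne one_ne_zero))
  refine ⟨⟨fun k i => ⟨?_, ?_⟩, fun i => ?_, fun k => ?_⟩, ?_⟩
  · exact hP'eq k i ▸ (fuzzyMembership_pos (hd i) k).le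
  · exact hP'eq k i ▸ fuzzyMembership_le_one (hd i) k
  · have := hK i
    simp_rw [hP'eq]
    exact sum_fuzzyMembership (hd i)
  · exact sum_pos (fun i _ => hP'eq k i ▸ fuzzyMembership_pos (hd i) k)
      (nonempty_of_sum_ne_zero (hProw k).ne')
  calc ∑ i, ∑ k, P' k i ^ m * ‖Rr k (S' k i) i - v' k‖ ^ 2
      ≤ ∑ i, ∑ k, P k i ^ m * ‖Rr k (S' k i) i - v' k‖ ^ 2 := sum_le_sum fun i _ => by
        have := hK i
        simp_rw [hP'eq]
        exact sum_fuzzyMembership_rpow_mul_le hm (hd i) (fun k => (hP01 k i).1) (hPcol i)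
    _ ≤ ∑ i, ∑ k, P k i ^ m * ‖Rr k (S k i) i - v' k‖ ^ 2 :=
        sum_le_sum fun i _ => sum_le_sum fun k _ => mul_le_mul_of_nonneg_left
          (pow_le_pow_left₀ (norm_nonneg _) (hS' k i) 2) (Real.rpow_nonneg (hP01 k i).1 m)
    _ = ∑ k, ∑ i, P k i ^ m * ‖Rr k (S k i) i - v' k‖ ^ 2 := sum_comm
    _ ≤ ∑ k, ∑ i, P k i ^ m * ‖Rr k (S k i) i - v k‖ ^ 2 := sum_le_sum fun k _ => by
        rw [hv' k]
        exact univ.sum_mul_norm_sub_centerMass_sq_le _ (v k)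
          (sum_rpow_pos (fun i _ => (hP01 k i).1) (hProw k) m)
    _ = ∑ i, ∑ k, P k i ^ m * ‖Rr k (S k i) i - v k‖ ^ 2 := sum_comm

/-- One iteration of the probKMA map (center update by weighted means,
shift update decreasing the distances, membership update by the explicit formula,
assuming all new distances are positive) maps a feasible triple to a feasible triple
and does not increase `J_m`. Here `Rr k s i ∈ L²((0,c_k), ℝ^d)` denotes the restriction
to `(0,c_k)` of the shifted curve `t ↦ x_i(t+s)`. -/
theorem probKMA_iteration_descent
    (N K d : ℕ) (hN : 1 ≤ N) (hK : 1 ≤ K) (hd : 1 ≤ d) (m : ℝ) (hm : 1 < m)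
    (x : Fin N → Lp (EuclideanSpace ℝ (Fin d)) 2 (volume : Measure ℝ))
    (c : Fin K → ℝ) (hc : ∀ k, 0 < c k)
    (Rr : (k : Fin K) → ℝ → Fin N →
      Lp (EuclideanSpace ℝ (Fin d)) 2 (volume.restrict (Set.Ioo (0 : ℝ) (c k))))
    (hRr : ∀ k s i, ⇑(Rr k s i) =ᵐ[volume.restrict (Set.Ioo (0 : ℝ) (c k))]
      fun t => x i (t + s))
    (P S : Fin K → Fin N → ℝ)
    (hP01 : ∀ k i, P k i ∈ Set.Icc (0 : ℝ) 1)
    (hPcol : ∀ i, ∑ k, P k i = 1)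
    (hProw : ∀ k, 0 < ∑ i, P k i)
    (v v' : (k : Fin K) →
      Lp (EuclideanSpace ℝ (Fin d)) 2 (volume.restrict (Set.Ioo (0 : ℝ) (c k))))
    (hv' : ∀ k, v' k = (∑ i, P k i ^ m)⁻¹ • ∑ i, P k i ^ m • Rr k (S k i) i)
    (S' : Fin K → Fin N → ℝ)
    (hS' : ∀ k i, ‖Rr k (S' k i) i - v' k‖ ≤ ‖Rr k (S k i) i - v' k‖)
    (hdpos : ∀ k i, 0 < ‖Rr k (S' k i) i - v' k‖)
    (P' : Fin K → Fin N → ℝ)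
    (hP' : ∀ k i, P' k i =
      (∑ l, (‖Rr k (S' k i) i - v' k‖ ^ 2 / ‖Rr l (S' l i) i - v' l‖ ^ 2) ^
        ((1 : ℝ) / (m - 1)))⁻¹) :
    ((∀ k i, P' k i ∈ Set.Icc (0 : ℝ) 1) ∧ (∀ i, ∑ k, P' k i = 1) ∧
        (∀ k, 0 < ∑ i, P' k i)) ∧
      (∑ i, ∑ k, P' k i ^ m * ‖Rr k (S' k i) i - v' k‖ ^ 2) ≤
        ∑ i, ∑ k, P k i ^ m * ‖Rr k (S k i) i - v k‖ ^ 2 :=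
  probKMA_iteration_descent_general N K d m hm c Rr P S hP01 hPcol hProw v v' hv' S' hS' hdpos P'
    hP'
end
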